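/- arXiv:1811.03724 — 2 statements merged into one kernel-verified Lean document; each statement's English description precedes it below -/
import Mathlib

section
/- If A is a 2N×2N skew-symmetric matrix over a commutative ring, then Pf(A)² = det(A). -/
/-!
For a pairing `e : κ × Fin 2 ≃ ι` of the index set put
`pfaffianSum e A = ∑ σ, sign σ * ∏ k, A (σ (e (k, 1))) (σ (e (k, 0)))`, so that
`pf A = pfaffianSum e A / (2 ^ N * N!)` for the pairing `(i, b) ↦ 2 i + b` of `Fin (2 N)`.
Expanding the entries of `Pᵀ A P` gives `pfaffianSum e (Pᵀ A P) = det P * pfaffianSum e A`, just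
as for the determinant. A nonzero skew-symmetric matrix is congruent, via a permutation, a rescaling
and a block elimination, to `J₂ ⊕ B` with `B` skew-symmetric, and
`pfaffianSum (J₂ ⊕ B) = 2 (n + 1) pfaffianSum B`: each of the `n + 1` pairs can be the one sent
onto the `J₂` block, and all contribute equally. As `det (J₂ ⊕ B) = det B`, induction on the
number of pairs gives `pfaffianSum e A ^ 2 = (2 ^ n n!) ^ 2 det A`.
-/

open Matrix Equiv

/-- The Pfaffian of a `2N × 2N` matrix, via the permutation sum formula. -/
noncomputable def pf {K : Type*} [Field K] {N : ℕ}
    (A : Matrix (Fin (2 * N)) (Fin (2 * N)) K) : K :=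
  ((2 ^ N * Nat.factorial N : ℕ) : K)⁻¹ *
    ∑ σ : Equiv.Perm (Fin (2 * N)), ((Equiv.Perm.sign σ : ℤ) : K) *
      ∏ i : Fin N, A (σ ⟨2 * i.val + 1, by omega⟩) (σ ⟨2 * i.val, by omega⟩)

open Equiv.Perm

section PfaffianSum

variable {R : Type*} [CommRing R] {κ κ' ι ι' : Type*} [Fintype κ] [Fintype κ'] [Fintype ι]

theorem transpose_mul_mul_apply (P A : Matrix ι ι R) (u v : ι) :
    (Pᵀ * A * P) u v = ∑ a, ∑ b, P a u * A a b * P b v := by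
  simp only [Matrix.mul_apply, transpose_apply, Finset.sum_mul]
  exact Finset.sum_comm

variable [DecidableEq ι] [Fintype ι'] [DecidableEq ι']

def pairProd (e : κ × Fin 2 ≃ ι) (A : Matrix ι ι R) (ψ : ι → ι) : R :=
  ∏ k, A (ψ (e (k, 1))) (ψ (e (k, 0)))

def pfaffianSum (e : κ × Fin 2 ≃ ι) (A : Matrix ι ι R) : R :=
  ∑ σ : Perm ι, ((sign σ : ℤ) : R) * pairProd e A σ

theorem pfaffianSum_submatrix (e : κ × Fin 2 ≃ ι') (f : ι' ≃ ι) (A : Matrix ι ι R) :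
    pfaffianSum e (A.submatrix f f) = pfaffianSum (e.trans f) A :=
  Fintype.sum_equiv f.permCongr _ _ fun σ => by
    simp [pairProd, sign_permCongr, permCongr_apply]

theorem pfaffianSum_prodCongr (g : κ' ≃ κ) (e : κ × Fin 2 ≃ ι) (A : Matrix ι ι R) :
    pfaffianSum ((g.prodCongr (Equiv.refl _)).trans e) A = pfaffianSum e A :=
  Fintype.sum_congr _ _ fun _ => congrArg _ (Fintype.prod_equiv g _ _ fun _ => rfl)

theorem prod_sum_sum_eq_sum_fun (e : κ × Fin 2 ≃ ι) (h : κ → ι → ι → R) :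
    ∏ k, ∑ a, ∑ b, h k a b = ∑ ψ : ι → ι, ∏ k, h k (ψ (e (k, 1))) (ψ (e (k, 0))) := by
  classical
  have hpair : ∀ k, ∑ a, ∑ b, h k a b = ∑ p : Fin 2 → ι, h k (p 1) (p 0) := fun k => by
    rw [← (finTwoArrowEquiv ι).symm.sum_comp, Fintype.sum_prod_type, Finset.sum_comm]
    simp
  simp_rw [hpair, Fintype.prod_sum]
  exact ((e.symm.arrowCongr (Equiv.refl ι)).trans (Equiv.curry κ (Fin 2) ι)).sum_comp
    (fun Φ => ∏ k, h k (Φ k 1) (Φ k 0)) |>.symm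

theorem pairProd_transpose_mul_mul (e : κ × Fin 2 ≃ ι) (P A : Matrix ι ι R) (σ : ι → ι) :
    pairProd e (Pᵀ * A * P) σ = ∑ ψ : ι → ι, pairProd e A ψ * ∏ x, P (ψ x) (σ x) := by
  simp only [pairProd, transpose_mul_mul_apply, prod_sum_sum_eq_sum_fun e]
  refine Fintype.sum_congr _ _ fun ψ => ?_
  rw [← e.prod_comp, Fintype.prod_prod_type, ← Finset.prod_mul_distrib]
  refine Fintype.prod_congr _ _ fun k => ?_
  rw [Fin.prod_univ_two]
  ring

theorem sum_mul_det_submatrix (P : Matrix ι ι R) (g : (ι → ι) → R) :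
    ∑ ψ : ι → ι, g ψ * (P.submatrix ψ id).det =
      P.det * ∑ τ : Perm ι, ((sign τ : ℤ) : R) * g τ := by
  rw [Finset.mul_sum]
  refine (Fintype.sum_of_injective (fun τ : Perm ι => (τ : ι → ι)) DFunLike.coe_injective _ _
    (fun ψ hψ => ?_) fun τ => ?_).symm
  · obtain ⟨a, b, hab, hne⟩ : ∃ a b, ψ a = ψ b ∧ a ≠ b := by
      by_contra! h
      exact hψ ⟨Equiv.ofBijective ψ (Finite.injective_iff_bijective.mp h), rfl⟩
    rw [det_zero_of_row_eq hne (by ext; simp [hab]), mul_zero]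
  · rw [det_permute]
    ring

theorem pfaffianSum_transpose_mul_mul (e : κ × Fin 2 ≃ ι) (P A : Matrix ι ι R) :
    pfaffianSum e (Pᵀ * A * P) = P.det * pfaffianSum e A := by
  have hdet : ∀ ψ : ι → ι,
      ∑ σ : Perm ι, ((sign σ : ℤ) : R) * ∏ x, P (ψ x) (σ x) = (P.submatrix ψ id).det := by
    intro ψ
    rw [← det_transpose, det_apply]
    simp [Units.smul_def]
  calc pfaffianSum e (Pᵀ * A * P)
      = ∑ ψ : ι → ι, pairProd e A ψ *
          ∑ σ : Perm ι, ((sign σ : ℤ) : R) * ∏ x, P (ψ x) (σ x) := by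
        simp only [pfaffianSum, pairProd_transpose_mul_mul, Finset.mul_sum]
        rw [Finset.sum_comm]
        simp only [mul_left_comm]
    _ = P.det * pfaffianSum e A := by
        simp only [hdet, sum_mul_det_submatrix, pfaffianSum]

end PfaffianSum

section PairPerm

variable {R : Type*} [CommRing R] {κ ι : Type*}

def pairPerm (e : κ × Fin 2 ≃ ι) (ρ : Perm κ) : Perm ι :=
  e.permCongr (prodCongrLeft fun _ => ρ)

theorem pairPerm_apply (e : κ × Fin 2 ≃ ι) (ρ : Perm κ) (k : κ) (b : Fin 2) :
    pairPerm e ρ (e (k, b)) = e (ρ k, b) := by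
  simp [pairPerm, permCongr_apply]

theorem pairPerm_symm_apply (e : κ × Fin 2 ≃ ι) (ρ : Perm κ) (x : ι) :
    e.symm ((pairPerm e ρ).symm x) = (ρ.symm (e.symm x).1, (e.symm x).2) := by
  rw [Equiv.symm_apply_eq, Equiv.symm_apply_eq, pairPerm_apply]
  simp

variable [Fintype κ]

theorem pairProd_comp_pairPerm (e : κ × Fin 2 ≃ ι) (A : Matrix ι ι R) (σ : ι → ι)
    (ρ : Perm κ) : pairProd e A (σ ∘ pairPerm e ρ) = pairProd e A σ :=
  Fintype.prod_equiv ρ _ _ fun k => by simp [pairPerm_apply]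

variable [Fintype ι] [DecidableEq ι]

theorem sign_pairPerm (e : κ × Fin 2 ≃ ι) (ρ : Perm κ) : sign (pairPerm e ρ) = 1 := by
  classical
  simp [pairPerm, sign_permCongr, sign_prodCongrLeft]

/-- Precomposing with `pairPerm e (swap k k₀)` leaves each term unchanged and moves the pair
that `σ` sends onto `x₀` from `k` to `k₀`, so all `card κ` such fibres have the same sum. -/
theorem pfaffianSum_eq_card_mul_sum_filter [DecidableEq κ] (e : κ × Fin 2 ≃ ι)
    (A : Matrix ι ι R) (x₀ : ι) (k₀ : κ) :
    pfaffianSum e A = Fintype.card κ * ∑ σ : Perm ι with (e.symm (σ.symm x₀)).1 = k₀,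
      ((sign σ : ℤ) : R) * pairProd e A σ := by
  have hfiber : ∀ k, ∑ σ : Perm ι with (e.symm (σ.symm x₀)).1 = k,
      ((sign σ : ℤ) : R) * pairProd e A σ = ∑ σ : Perm ι with (e.symm (σ.symm x₀)).1 = k₀,
      ((sign σ : ℤ) : R) * pairProd e A σ := by
    intro k
    refine Finset.sum_equiv (Equiv.mulRight (pairPerm e (swap k k₀))) (fun σ => ?_)
      fun σ _ => ?_
    · simp only [coe_mulRight, Finset.mem_filter_univ, Perm.mul_def, Equiv.symm_trans_apply,
        pairPerm_symm_apply, Equiv.symm_swap, swap_apply_eq_iff, swap_apply_right]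
    · simp [Perm.sign_mul, sign_pairPerm, pairProd_comp_pairPerm]
  rw [pfaffianSum, ← Finset.sum_fiberwise Finset.univ fun σ : Perm ι => (e.symm (σ.symm x₀)).1]
  simp only [hfiber, Finset.sum_const, Finset.card_univ, nsmul_eq_mul]

end PairPerm

section BlockDiagonal

variable {R : Type*} [CommRing R] {κ ι : Type*}

def optionPairing (e : κ × Fin 2 ≃ ι) : Option κ × Fin 2 ≃ Fin 2 ⊕ ι where
  toFun
    | (none, b) => .inl b
    | (some k, b) => .inr (e (k, b))
  invFun
    | .inl b => (none, b)
    | .inr x => (some (e.symm x).1, (e.symm x).2)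
  left_inv := by rintro ⟨_ | k, b⟩ <;> simp
  right_inv := by rintro (b | x) <;> simp

theorem sum_perm_fin_two_sign_mul_apply (D : Matrix (Fin 2) (Fin 2) R) :
    ∑ p : Perm (Fin 2), ((sign p : ℤ) : R) * D (p 1) (p 0) = D 1 0 - D 0 1 := by
  rw [show (Finset.univ : Finset (Perm (Fin 2))) = {1, swap 0 1} by decide,
    Finset.sum_pair (by decide)]
  simp [sub_eq_add_neg]

theorem mem_range_sumCongrHom_of_fromBlocks_ne_zero [Finite ι] (e : κ × Fin 2 ≃ ι)
    (D : Matrix (Fin 2) (Fin 2) R) (B : Matrix ι ι R) {σ : Perm (Fin 2 ⊕ ι)}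
    (hσ : ((optionPairing e).symm (σ.symm (.inl 0))).1 = none)
    (hD : fromBlocks D 0 0 B (σ (.inl 1)) (σ (.inl 0)) ≠ 0) :
    σ ∈ (sumCongrHom (Fin 2) ι).range := by
  have hblock : (σ (.inl 1)).isLeft = (σ (.inl 0)).isLeft := by
    revert hD
    rcases σ (.inl 1) with _ | _ <;> rcases σ (.inl 0) with _ | _ <;> simp
  obtain ⟨b, hb⟩ : ∃ b, σ (.inl b) = .inl 0 := by
    rcases hx : σ.symm (.inl 0) with b | x
    · exact ⟨b, by rw [← hx, apply_symm_apply]⟩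
    · simp [hx, optionPairing] at hσ
  have hleft : ∀ a, (σ (.inl a)).isLeft := by
    have : (σ (.inl b)).isLeft := by rw [hb]; rfl
    intro a
    fin_cases a <;> fin_cases b <;> simp_all
  apply mem_sumCongrHom_range_of_perm_mapsTo_inl
  rintro _ ⟨a, rfl⟩
  exact Sum.isLeft_iff.mp (hleft a) |>.imp fun _ h => h.symm

variable [Fintype κ]

theorem pairProd_optionPairing_sumCongr (e : κ × Fin 2 ≃ ι) (D : Matrix (Fin 2) (Fin 2) R)
    (C : Matrix (Fin 2) ι R) (C' : Matrix ι (Fin 2) R) (B : Matrix ι ι R) (p : Perm (Fin 2))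
    (q : Perm ι) :
    pairProd (optionPairing e) (fromBlocks D C C' B) (Perm.sumCongr p q) =
      D (p 1) (p 0) * pairProd e B q := by
  simp [pairProd, Fintype.prod_option, optionPairing]

variable [Fintype ι] [DecidableEq ι]

theorem sum_filter_optionPairing_fromBlocks (e : κ × Fin 2 ≃ ι) (D : Matrix (Fin 2) (Fin 2) R)
    (B : Matrix ι ι R) :
    ∑ σ : Perm (Fin 2 ⊕ ι) with ((optionPairing e).symm (σ.symm (.inl 0))).1 = none,
        ((sign σ : ℤ) : R) * pairProd (optionPairing e) (fromBlocks D 0 0 B) σ =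
      (D 1 0 - D 0 1) * pfaffianSum e B := by
  rw [← sum_perm_fin_two_sign_mul_apply, pfaffianSum, Finset.sum_mul_sum,
    ← Fintype.sum_prod_type']
  symm
  refine Finset.sum_of_injOn (sumCongrHom (Fin 2) ι) sumCongrHom_injective.injOn
    (fun pq _ => by rw [Finset.mem_coe, Finset.mem_filter_univ]; simp [optionPairing])
    (fun σ hσ hrange => ?_) fun pq _ => ?_
  · by_contra hne
    obtain ⟨pq, rfl⟩ := mem_range_sumCongrHom_of_fromBlocks_ne_zero e D B
      (Finset.mem_filter.mp hσ).2 fun h0 => hne (by simp [pairProd, optionPairing, h0])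
    exact hrange ⟨pq, by simp, rfl⟩
  · simp only [sumCongrHom_apply, sign_sumCongr, Units.val_mul, Int.cast_mul,
      pairProd_optionPairing_sumCongr]
    ring

theorem pfaffianSum_optionPairing_fromBlocks (e : κ × Fin 2 ≃ ι) (D : Matrix (Fin 2) (Fin 2) R)
    (B : Matrix ι ι R) :
    pfaffianSum (optionPairing e) (fromBlocks D 0 0 B) =
      (Fintype.card κ + 1) * (D 1 0 - D 0 1) * pfaffianSum e B := by
  classical
  rw [pfaffianSum_eq_card_mul_sum_filter _ _ (.inl 0) none,
    sum_filter_optionPairing_fromBlocks, Fintype.card_option]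
  push_cast
  ring

end BlockDiagonal

section Congruence

variable {R : Type*} [CommRing R] {ι : Type*}

variable (R) in
def J₂ : Matrix (Fin 2) (Fin 2) R := !![0, -1; 1, 0]

theorem J₂_mul_J₂ : J₂ R * J₂ R = -1 := by
  ext i j; fin_cases i <;> fin_cases j <;> simp [J₂]

theorem J₂_transpose : (J₂ R)ᵀ = -J₂ R := by
  ext i j; fin_cases i <;> fin_cases j <;> simp [J₂]

theorem apply_self_eq_zero_of_transpose_eq_neg [NoZeroDivisors R] [NeZero (2 : R)]
    {A : Matrix ι ι R} (hA : Aᵀ = -A) (i : ι) : A i i = 0 := by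
  have h : A i i = -A i i := congrFun (congrFun hA i) i
  have h2 : (2 : R) * A i i = 0 := by linear_combination h
  exact (mul_eq_zero.mp h2).resolve_left two_ne_zero

theorem eq_fromBlocks_of_apply_inl_one_inl_zero [NoZeroDivisors R] [NeZero (2 : R)]
    {A : Matrix (Fin 2 ⊕ ι) (Fin 2 ⊕ ι) R}
    (hA : Aᵀ = -A) (h10 : A (.inl 1) (.inl 0) = 1) :
    A = fromBlocks (J₂ R) A.toBlocks₁₂ (-A.toBlocks₁₂ᵀ) A.toBlocks₂₂ := by
  have hskew : ∀ u v, A v u = -A u v := fun u v => congrFun (congrFun hA u) v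
  have hdiag := apply_self_eq_zero_of_transpose_eq_neg hA
  ext (a | x) (b | y)
  · fin_cases a <;> fin_cases b <;> simp [J₂, hdiag, h10, hskew (.inl 1) (.inl 0)]
  · rfl
  · simp [toBlocks₁₂, hskew (.inr x)]
  · rfl

variable [Fintype ι]

theorem transpose_mul_mul_eq_neg {A : Matrix ι ι R} (hA : Aᵀ = -A) (P : Matrix ι ι R) :
    (Pᵀ * A * P)ᵀ = -(Pᵀ * A * P) := by
  simp [transpose_mul, hA, Matrix.mul_assoc]

variable [DecidableEq ι]

theorem fromBlocks_transpose_mul_mul (X : Matrix (Fin 2) ι R) (C : Matrix ι ι R) :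
    (fromBlocks 1 (J₂ R * X) 0 1)ᵀ * fromBlocks (J₂ R) X (-Xᵀ) C * fromBlocks 1 (J₂ R * X) 0 1 =
      fromBlocks (J₂ R) 0 0 (C - Xᵀ * J₂ R * X) := by
  have h : Xᵀ * J₂ R * J₂ R = -Xᵀ := by simp [Matrix.mul_assoc, J₂_mul_J₂]
  simp [fromBlocks_transpose, fromBlocks_multiply, transpose_mul, J₂_transpose,
    ← Matrix.mul_assoc, J₂_mul_J₂, h, sub_eq_neg_add]

end Congruence

section NormalForm

variable {K : Type*} [Field K] [NeZero (2 : K)] {ι : Type*} [Fintype ι] [DecidableEq ι]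

theorem exists_transpose_mul_mul_apply_eq_one {A : Matrix ι ι K} (hA : Aᵀ = -A) (hA0 : A ≠ 0)
    {x y : ι} (hxy : x ≠ y) : ∃ Q : Matrix ι ι K, Q.det ≠ 0 ∧ (Qᵀ * A * Q) x y = 1 := by
  obtain ⟨i, j, hij⟩ : ∃ i j, A i j ≠ 0 := by
    by_contra! h
    exact hA0 (Matrix.ext h)
  have hne : i ≠ j := fun h => hij (h ▸ apply_self_eq_zero_of_transpose_eq_neg hA i)
  obtain ⟨π, hπx, hπy⟩ : ∃ π : Perm ι, π x = i ∧ π y = j :=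
    MulAction.is_two_pretransitive_iff.mp (Equiv.Perm.isMultiplyPretransitive ι 2) hxy hne
  set d : ι → K := Function.update 1 x (A i j)⁻¹
  refine ⟨(π⁻¹).permMatrix K * diagonal d, ?_, ?_⟩
  · simpa [det_permutation, d, Finset.prod_update_of_mem, hij] using
      ((sign π).isUnit.map (Int.castRingHom K)).ne_zero
  · have hperm : π.permMatrix K * A * (π⁻¹).permMatrix K = A.submatrix π π := by
      simp [PEquiv.toMatrix_toPEquiv_mul, PEquiv.mul_toMatrix_toPEquiv, Perm.inv_def]
    rw [transpose_mul, transpose_permMatrix, inv_inv, diagonal_transpose,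
      show diagonal d * π.permMatrix K * A * ((π⁻¹).permMatrix K * diagonal d) =
        diagonal d * (π.permMatrix K * A * (π⁻¹).permMatrix K) * diagonal d by
          simp only [Matrix.mul_assoc], hperm]
    simp [d, hπx, hπy, hxy.symm, hij]

theorem exists_transpose_mul_mul_eq_fromBlocks {A : Matrix (Fin 2 ⊕ ι) (Fin 2 ⊕ ι) K}
    (hA : Aᵀ = -A) (hA0 : A ≠ 0) :
    ∃ (P : Matrix (Fin 2 ⊕ ι) (Fin 2 ⊕ ι) K) (B : Matrix ι ι K),
      P.det ≠ 0 ∧ Bᵀ = -B ∧ Pᵀ * A * P = fromBlocks (J₂ K) 0 0 B := by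
  obtain ⟨Q, hQ, h10⟩ :=
    exists_transpose_mul_mul_apply_eq_one hA hA0 (x := .inl 1) (y := .inl 0) (by simp)
  set A₁ := Qᵀ * A * Q
  set X := A₁.toBlocks₁₂
  set M : Matrix (Fin 2 ⊕ ι) (Fin 2 ⊕ ι) K := fromBlocks 1 (J₂ K * X) 0 1
  have hPAP : (Q * M)ᵀ * A * (Q * M) =
      fromBlocks (J₂ K) 0 0 (A₁.toBlocks₂₂ - Xᵀ * J₂ K * X) := by
    rw [transpose_mul,
      show Mᵀ * Qᵀ * A * (Q * M) = Mᵀ * A₁ * M by simp only [A₁, Matrix.mul_assoc],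
      eq_fromBlocks_of_apply_inl_one_inl_zero (A := A₁) (transpose_mul_mul_eq_neg hA Q) h10,
      fromBlocks_transpose_mul_mul, toBlocks_fromBlocks₂₂]
  refine ⟨Q * M, _, by simpa [M, det_fromBlocks_zero₂₁] using hQ, ?_, hPAP⟩
  have hskew := transpose_mul_mul_eq_neg hA (Q * M)
  rw [hPAP, fromBlocks_transpose, fromBlocks_neg] at hskew
  simpa using congrArg toBlocks₂₂ hskew

end NormalForm

section Square

variable {K : Type*} [Field K] [NeZero (2 : K)] {κ ι : Type*} [Fintype κ] [Fintype ι]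
  [DecidableEq ι]

theorem pfaffianSum_optionPairing_sq {c : K} (e : κ × Fin 2 ≃ ι)
    (ih : ∀ B : Matrix ι ι K, Bᵀ = -B → pfaffianSum e B ^ 2 = c ^ 2 * B.det)
    (A : Matrix (Fin 2 ⊕ ι) (Fin 2 ⊕ ι) K) (hA : Aᵀ = -A) :
    pfaffianSum (optionPairing e) A ^ 2 = (2 * (Fintype.card κ + 1) * c) ^ 2 * A.det := by
  by_cases hA0 : A = 0
  · subst hA0
    simp [pfaffianSum, pairProd]
  obtain ⟨P, B, hP, hB, hPAP⟩ := exists_transpose_mul_mul_eq_fromBlocks hA hA0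
  have hpf : P.det * pfaffianSum (optionPairing e) A =
      2 * (Fintype.card κ + 1) * pfaffianSum e B := by
    have hJ : J₂ K 1 0 - J₂ K 0 1 = 2 := by norm_num [J₂]
    rw [← pfaffianSum_transpose_mul_mul, hPAP, pfaffianSum_optionPairing_fromBlocks, hJ]
    ring
  have hdet : P.det ^ 2 * A.det = B.det := by
    have h := congrArg det hPAP
    rw [det_mul, det_mul, det_transpose, det_fromBlocks_zero₂₁] at h
    simpa [J₂, sq, mul_comm, mul_left_comm] using h
  apply mul_left_cancel₀ (pow_ne_zero 2 hP)
  calc P.det ^ 2 * pfaffianSum (optionPairing e) A ^ 2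
      = (2 * (Fintype.card κ + 1)) ^ 2 * pfaffianSum e B ^ 2 := by rw [← mul_pow, hpf, mul_pow]
    _ = P.det ^ 2 * ((2 * (Fintype.card κ + 1) * c) ^ 2 * A.det) := by
        rw [ih B hB, ← hdet]
        ring

theorem pfaffianSum_refl_sq [DecidableEq κ] (A : Matrix (κ × Fin 2) (κ × Fin 2) K)
    (hA : Aᵀ = -A) :
    pfaffianSum (Equiv.refl _) A ^ 2 =
      ((2 ^ Fintype.card κ * (Fintype.card κ).factorial : ℕ) : K) ^ 2 * A.det := by
  refine Fintype.induction_empty_option (P := fun α _ => ∀ [DecidableEq α]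
    (A : Matrix (α × Fin 2) (α × Fin 2) K), Aᵀ = -A → pfaffianSum (Equiv.refl _) A ^ 2 =
      ((2 ^ Fintype.card α * (Fintype.card α).factorial : ℕ) : K) ^ 2 * A.det) ?_ ?_ ?_ κ A hA
  · intro α β _ g ih _ A hA
    classical
    let := Fintype.ofEquiv β g.symm
    have h := ih (A.submatrix (g.prodCongr (Equiv.refl _)) (g.prodCongr (Equiv.refl _)))
      (by rw [transpose_submatrix, hA]; rfl)
    rw [det_submatrix_equiv_self, pfaffianSum_submatrix, Equiv.refl_trans,
      ← Equiv.trans_refl (g.prodCongr _), pfaffianSum_prodCongr, Fintype.card_congr g] at h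
    convert h using 3
  · intro _ A hA
    simp [pfaffianSum, pairProd]
  · intro α _ ih _ A hA
    classical
    have h := pfaffianSum_optionPairing_sq (Equiv.refl _) (fun B hB => ih B hB)
      (A.submatrix (optionPairing (Equiv.refl _)).symm (optionPairing (Equiv.refl _)).symm)
      (by rw [transpose_submatrix, hA]; rfl)
    rw [pfaffianSum_submatrix, Equiv.self_trans_symm, det_submatrix_equiv_self] at h
    rw [h, Fintype.card_option]
    push_cast [pow_succ, Nat.factorial_succ]
    ring

theorem pfaffianSum_sq (e : κ × Fin 2 ≃ ι) (A : Matrix ι ι K) (hA : Aᵀ = -A) :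
    pfaffianSum e A ^ 2 =
      ((2 ^ Fintype.card κ * (Fintype.card κ).factorial : ℕ) : K) ^ 2 * A.det := by
  classical
  have h := pfaffianSum_refl_sq (A.submatrix e e) (by rw [transpose_submatrix, hA]; rfl)
  rwa [pfaffianSum_submatrix, Equiv.refl_trans, det_submatrix_equiv_self] at h

end Square

theorem pf_eq_inv_mul_pfaffianSum {K : Type*} [Field K] {N : ℕ}
    (A : Matrix (Fin (2 * N)) (Fin (2 * N)) K) :
    pf A = ((2 ^ N * Nat.factorial N : ℕ) : K)⁻¹ *
      pfaffianSum (finProdFinEquiv.trans (finCongr (Nat.mul_comm N 2))) A := by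
  rw [pf, pfaffianSum]
  congr! with σ
  refine Fintype.prod_congr _ _ fun i => ?_
  congr 2 <;> ext <;> simp [add_comm]

/-- For a skew-symmetric matrix `A`, the square of the Pfaffian is the
determinant: `Pf(A)² = det A`. -/
theorem pf_sq_eq_det {K : Type*} [Field K] [CharZero K] {N : ℕ}
    (A : Matrix (Fin (2 * N)) (Fin (2 * N)) K) (hA : Aᵀ = -A) :
    pf A ^ 2 = A.det := by
  have hc : ((2 ^ N * Nat.factorial N : ℕ) : K) ≠ 0 := Nat.cast_ne_zero.mpr (by positivity)
  rw [pf_eq_inv_mul_pfaffianSum, mul_pow, pfaffianSum_sq _ A hA, Fintype.card_fin, ← mul_assoc,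
    ← mul_pow, inv_mul_cancel₀ hc, one_pow, one_mul]
end

section
/- The smallest eigenvalue of the overlap matrix is 1: for an N×N complex matrix G with distinct eigenvalues and overlap matrix 𝒪_{i,j} = A_{i,j}(A⁻¹)_{j,i} with A = P*P (the Hadamard product of A and (Aᵀ)⁻¹), the matrix 𝒪 is Hermitian positive definite and its minimal eigenvalue equals exactly 1. -/
open Matrix Finset
open scoped ComplexOrder

/-!
Write `A = Pᴴ P = U Λ Uᴴ` with `Λ = diag μ`, `μ > 0`, and `O = A ⊙ (A⁻¹)ᵀ`. For a vector `v`,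
`vᴴ O v = tr (Dᴴ A D A⁻¹)` with `D = diag v`, and conjugating by `U` turns this into
`∑ₖₗ (μₖ / μₗ) |Wₖₗ|²` for the normal matrix `W = Uᴴ D U`, while `vᴴ v = ∑ₖₗ |Wₖₗ|²`.
Since `W` is normal, `|W|²` has equal row and column sums, so in the bound
`μₖ / μₗ ≥ 1 + log μₖ - log μₗ` the logarithms cancel, giving `O ≥ 1`. The eigenvalue `1` is
attained at the all-ones vector, because the row sums of `O` are the diagonal of `A A⁻¹ = 1`.
-/

theorem sum_sum_le_sum_sum_div_mul {ι : Type*} [Fintype ι] {μ : ι → ℝ} (hμ : ∀ k, 0 < μ k)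
    {c : ι → ι → ℝ} (hc : ∀ k l, 0 ≤ c k l) (hrc : ∀ k, ∑ l, c k l = ∑ l, c l k) :
    ∑ k, ∑ l, c k l ≤ ∑ k, ∑ l, μ k / μ l * c k l := by
  have log_balance : ∑ k, ∑ l, (Real.log (μ k) - Real.log (μ l)) * c k l = 0 := by
    simp only [sub_mul, sum_sub_distrib, ← mul_sum, hrc]
    rw [sum_comm (f := fun k l => Real.log (μ l) * c k l)]
    simp only [← mul_sum, sub_self]
  calc ∑ k, ∑ l, c k l
      = ∑ k, ∑ l, (Real.log (μ k / μ l) + 1) * c k l := by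
        simp only [Real.log_div (hμ _).ne' (hμ _).ne', add_mul, one_mul, sum_add_distrib,
          log_balance, zero_add]
    _ ≤ ∑ k, ∑ l, μ k / μ l * c k l := by
        gcongr with k _ l _
        · exact hc k l
        · linarith [Real.log_le_sub_one_of_pos (div_pos (hμ k) (hμ l))]

namespace Matrix

open Unitary

variable {n 𝕜 : Type*} [Fintype n] [RCLike 𝕜]

theorem hadamard_transpose_mulVec_one {α : Type*} [NonAssocSemiring α] (A B : Matrix n n α) :
    (A ⊙ Bᵀ) *ᵥ 1 = (A * B).diag := by
  ext i
  simp [mulVec, dotProduct, mul_apply]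

theorem trace_conjTranspose_mul_self_eq_sum (W : Matrix n n 𝕜) :
    trace (Wᴴ * W) = ((∑ k, ∑ l, ‖W k l‖ ^ 2 : ℝ) : 𝕜) := by
  rw [sum_comm]
  simp [trace, mul_apply, RCLike.conj_mul]

theorem sum_norm_sq_row_eq_sum_norm_sq_col {W : Matrix n n 𝕜} (hW : IsStarNormal W) (k : n) :
    ∑ l, ‖W k l‖ ^ 2 = ∑ l, ‖W l k‖ ^ 2 := by
  have h := congr_fun₂ hW.star_comm_self.eq k k
  simp only [star_eq_conjTranspose, mul_apply, conjTranspose_apply, RCLike.star_def,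
    RCLike.conj_mul, RCLike.mul_conj] at h
  exact_mod_cast h.symm

variable [DecidableEq n]

theorem star_dotProduct_hadamard_transpose_mulVec_eq_trace {α : Type*} [CommSemiring α]
    [StarRing α] (A B : Matrix n n α) (v : n → α) :
    star v ⬝ᵥ ((A ⊙ Bᵀ) *ᵥ v) = trace ((diagonal v)ᴴ * A * diagonal v * B) := by
  rw [dotProduct_mulVec, dotProduct_vecMul_hadamard, transpose_mul, transpose_transpose,
    diagonal_transpose, diagonal_conjTranspose, Matrix.mul_assoc _ (diagonal v)]

theorem star_dotProduct_self_eq_trace_diagonal {α : Type*} [CommSemiring α] [StarRing α]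
    (v : n → α) : star v ⬝ᵥ v = trace ((diagonal v)ᴴ * diagonal v) := by
  simp [diagonal_conjTranspose, diagonal_mul_diagonal, trace_diagonal, dotProduct]

theorem isStarNormal_diagonal {α : Type*} [CommSemiring α] [StarRing α] (v : n → α) :
    IsStarNormal (diagonal v) :=
  ⟨by simp only [Commute, SemiconjBy, star_eq_conjTranspose, diagonal_conjTranspose,
    diagonal_mul_diagonal, mul_comm]⟩

theorem trace_conjTranspose_mul_diagonal_mul_mul_diagonal_eq_sum (W : Matrix n n 𝕜)
    (μ : n → ℝ) :
    trace (Wᴴ * diagonal (fun k => (μ k : 𝕜)) * W * diagonal (fun k => ((μ k)⁻¹ : 𝕜))) =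
      ((∑ k, ∑ l, μ k / μ l * ‖W k l‖ ^ 2 : ℝ) : 𝕜) := by
  rw [Matrix.mul_assoc (Wᴴ * _), sum_comm]
  simp only [trace, diag_apply, mul_apply, diagonal_apply, mul_ite, mul_zero, sum_ite_eq',
    mem_univ, if_true, conjTranspose_apply, RCLike.star_def]
  push_cast
  refine sum_congr rfl fun k _ => sum_congr rfl fun l _ => ?_
  rw [← RCLike.conj_mul]
  ring

theorem trace_conjStarAlgAut (U : unitaryGroup n 𝕜) (X : Matrix n n 𝕜) :
    trace (conjStarAlgAut 𝕜 _ U X) = trace X := by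
  rw [conjStarAlgAut_apply, trace_mul_cycle, Unitary.coe_star_mul_self, Matrix.one_mul]

theorem IsStarNormal.trace_conjTranspose_mul_self_le {W : Matrix n n 𝕜} (hW : IsStarNormal W)
    {μ : n → ℝ} (hμ : ∀ k, 0 < μ k) :
    trace (Wᴴ * W) ≤
      trace (Wᴴ * diagonal (fun k => (μ k : 𝕜)) * W * diagonal (fun k => ((μ k)⁻¹ : 𝕜))) := by
  rw [trace_conjTranspose_mul_self_eq_sum,
    trace_conjTranspose_mul_diagonal_mul_mul_diagonal_eq_sum]
  exact_mod_cast sum_sum_le_sum_sum_div_mul hμ (fun _ _ => by positivity)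
    (sum_norm_sq_row_eq_sum_norm_sq_col hW)

theorem PosDef.trace_conjTranspose_mul_self_le {A : Matrix n n 𝕜} (hA : A.PosDef)
    {D : Matrix n n 𝕜} (hD : IsStarNormal D) :
    trace (Dᴴ * D) ≤ trace (Dᴴ * A * D * A⁻¹) := by
  set φ := conjStarAlgAut 𝕜 _ hA.1.eigenvectorUnitary
  set μ := hA.1.eigenvalues
  have hA_eq : A = φ (diagonal fun k => (μ k : 𝕜)) := hA.1.spectral_theorem
  have hA_inv : A⁻¹ = φ (diagonal fun k => ((μ k)⁻¹ : 𝕜)) := by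
    have hμ : (fun k => ((μ k)⁻¹ : 𝕜) * μ k) = fun _ => 1 :=
      funext fun k => inv_mul_cancel₀ (by exact_mod_cast (hA.eigenvalues_pos k).ne')
    refine inv_eq_left_inv ?_
    rw [hA_eq, ← map_mul, diagonal_mul_diagonal, hμ, diagonal_one, map_one]
  have hW : IsStarNormal (φ.symm D) :=
    ⟨by simpa only [map_star] using hD.star_comm_self.map φ.symm⟩
  rw [← φ.apply_symm_apply D, hA_inv, hA_eq, ← star_eq_conjTranspose, ← map_star,
    ← map_mul, ← map_mul, ← map_mul, ← map_mul, trace_conjStarAlgAut, trace_conjStarAlgAut]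
  exact hW.trace_conjTranspose_mul_self_le hA.eigenvalues_pos

theorem PosDef.posSemidef_hadamard_inv_transpose_sub_one {A : Matrix n n 𝕜} (hA : A.PosDef) :
    (A ⊙ A⁻¹ᵀ - 1).PosSemidef := by
  refine .of_dotProduct_mulVec_nonneg
    ((hA.1.hadamard hA.1.inv.transpose).sub isHermitian_one) fun v => ?_
  rw [sub_mulVec, one_mulVec, dotProduct_sub, sub_nonneg,
    star_dotProduct_hadamard_transpose_mulVec_eq_trace, star_dotProduct_self_eq_trace_diagonal]
  exact hA.trace_conjTranspose_mul_self_le (isStarNormal_diagonal v)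

theorem IsHermitian.one_le_eigenvalues {H : Matrix n n 𝕜} (hH : H.IsHermitian)
    (h : (H - 1).PosSemidef) (i : n) : 1 ≤ hH.eigenvalues i := by
  have := h.re_dotProduct_nonneg (hH.eigenvectorBasis i)
  rw [sub_mulVec, one_mulVec, dotProduct_sub, map_sub, ← hH.eigenvalues_eq, dotProduct_comm,
    ← EuclideanSpace.inner_eq_star_dotProduct, inner_self_eq_norm_sq_to_K,
    hH.eigenvectorBasis.orthonormal.1 i] at this
  simpa [sub_nonneg] using this

theorem IsHermitian.exists_eigenvalues_eq {H : Matrix n n 𝕜} (hH : H.IsHermitian) {v : n → 𝕜}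
    (hv0 : v ≠ 0) {r : ℝ} (hv : H *ᵥ v = (r : 𝕜) • v) : ∃ i, hH.eigenvalues i = r := by
  have hr : (r : 𝕜) ∈ spectrum 𝕜 H := by
    rw [← spectrum_toLin']
    exact (Module.End.hasEigenvalue_of_hasEigenvector
      ⟨Module.End.mem_eigenspace_iff.2 (by simpa using hv), hv0⟩).mem_spectrum
  obtain ⟨_, ⟨i, rfl⟩, hi⟩ := hH.spectrum_eq_image_range ▸ hr
  exact ⟨i, RCLike.ofReal_injective hi⟩

end Matrix

theorem overlap_min_eigenvalue_general {N : ℕ} (hN : 0 < N)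
    (P : Matrix (Fin N) (Fin N) ℂ)
    (hP : IsUnit P.det) :
    ∃ hH : (Matrix.of fun i j : Fin N =>
        (Pᴴ * P) i j * (Pᴴ * P)⁻¹ j i).IsHermitian,
      (Matrix.of fun i j : Fin N =>
        (Pᴴ * P) i j * (Pᴴ * P)⁻¹ j i).PosDef ∧
      (∀ i : Fin N, 1 ≤ hH.eigenvalues i) ∧
      (∃ i : Fin N, hH.eigenvalues i = 1) := by
  set A := Pᴴ * P
  have hA : A.PosDef :=
    .conjTranspose_mul_self P (mulVec_injective_iff_isUnit.2 ((isUnit_iff_isUnit_det P).2 hP))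
  have hO : (A ⊙ A⁻¹ᵀ - 1).PosSemidef := hA.posSemidef_hadamard_inv_transpose_sub_one
  have hH : (A ⊙ A⁻¹ᵀ).IsHermitian := hA.1.hadamard hA.1.inv.transpose
  have hPD : (A ⊙ A⁻¹ᵀ).PosDef := by simpa using PosDef.one.add_posSemidef hO
  have hrow : (A ⊙ A⁻¹ᵀ) *ᵥ 1 = ((1 : ℝ) : ℂ) • 1 := by
    rw [hadamard_transpose_mulVec_one, mul_nonsing_inv A ((isUnit_iff_isUnit_det A).1 hA.isUnit),
      diag_one, Complex.ofReal_one, one_smul]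
  have : Nonempty (Fin N) := ⟨⟨0, hN⟩⟩
  exact ⟨hH, hPD, hH.one_le_eigenvalues hO, hH.exists_eigenvalues_eq one_ne_zero hrow⟩

/-- The overlap matrix `𝒪_{i,j} = A_{i,j}(A⁻¹)_{j,i}` (Hadamard product of
`A = P*P` and `(Aᵀ)⁻¹`) of a matrix `G = P Δ P⁻¹` with distinct eigenvalues
is Hermitian positive definite, and its smallest eigenvalue equals `1`. -/
theorem overlap_min_eigenvalue {N : ℕ} (hN : 0 < N)
    (G P : Matrix (Fin N) (Fin N) ℂ)
    (lam : Fin N → ℂ) (hP : IsUnit P.det) (hlam : Function.Injective lam)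
    (hG : G = P * Matrix.diagonal lam * P⁻¹) :
    ∃ hH : (Matrix.of fun i j : Fin N =>
        (Pᴴ * P) i j * (Pᴴ * P)⁻¹ j i).IsHermitian,
      (Matrix.of fun i j : Fin N =>
        (Pᴴ * P) i j * (Pᴴ * P)⁻¹ j i).PosDef ∧
      (∀ i : Fin N, 1 ≤ hH.eigenvalues i) ∧
      (∃ i : Fin N, hH.eigenvalues i = 1) :=
  overlap_min_eigenvalue_general hN P hP
end
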